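/- Let p ∈ ℝ³, R₀ ∈ SO(3), t₀, l₀ ∈ ℝ³ with l₀ ≠ t₀. Define λ₀ = (l₀−t₀)ᵀR₀p/‖l₀−t₀‖², g₀ = ½R₀p + ½λ₀t₀ + ½λ₀l₀, and e₀ = (I − R₀ᵀ(l₀−t₀)(l₀−t₀)ᵀR₀/‖l₀−t₀‖²)p. Then ‖R₀p + λ₀t₀ − g₀‖ = ½‖e₀‖ and ‖λ₀l₀ − g₀‖ = ½‖e₀‖. -/

import Mathlib

open Matrix
open scoped InnerProductSpace

/-- Apply a `3 × 3` real matrix to a vector of `EuclideanSpace ℝ (Fin 3)`. -/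
noncomputable def mv (A : Matrix (Fin 3) (Fin 3) ℝ) (v : EuclideanSpace ℝ (Fin 3)) :
    EuclideanSpace ℝ (Fin 3) :=
  (WithLp.equiv 2 (Fin 3 → ℝ)).symm (A.mulVec ((WithLp.equiv 2 (Fin 3 → ℝ)) v))

/-- The outer product `v vᵀ` of a vector with itself, as a `3 × 3` matrix. -/
noncomputable def outer (v : EuclideanSpace ℝ (Fin 3)) : Matrix (Fin 3) (Fin 3) ℝ :=
  Matrix.vecMulVec ((WithLp.equiv 2 (Fin 3 → ℝ)) v) ((WithLp.equiv 2 (Fin 3 → ℝ)) v)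

lemma mv_sub (A B : Matrix (Fin 3) (Fin 3) ℝ) (v : EuclideanSpace ℝ (Fin 3)) :
    mv (A - B) v = mv A v - mv B v := by
  simp [mv, Matrix.sub_mulVec, WithLp.toLp_sub]

lemma mv_smul (c : ℝ) (A : Matrix (Fin 3) (Fin 3) ℝ) (v : EuclideanSpace ℝ (Fin 3)) :
    mv (c • A) v = c • mv A v := by
  simp [mv, Matrix.smul_mulVec, WithLp.toLp_smul]

lemma mv_mul (A B : Matrix (Fin 3) (Fin 3) ℝ) (v : EuclideanSpace ℝ (Fin 3)) :
    mv (A * B) v = mv A (mv B v) := by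
  simp [mv, Matrix.mulVec_mulVec]

lemma inner_eq_dot (x y : EuclideanSpace ℝ (Fin 3)) :
    ⟪x, y⟫_ℝ = dotProduct ((WithLp.equiv 2 (Fin 3 → ℝ)) x)
      ((WithLp.equiv 2 (Fin 3 → ℝ)) y) := by
  simp [PiLp.inner_apply, dotProduct, RCLike.inner_apply, mul_comm]

lemma vecMulVec_mulVec' (a b x : Fin 3 → ℝ) :
    (Matrix.vecMulVec a b).mulVec x = (dotProduct b x) • a := by
  funext i
  simp only [Matrix.mulVec, dotProduct, Matrix.vecMulVec_apply, Pi.smul_apply,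
    smul_eq_mul, Finset.sum_mul]
  exact Finset.sum_congr rfl fun j _ => by ring

lemma mv_outer (u w : EuclideanSpace ℝ (Fin 3)) :
    mv (outer u) w = ⟪u, w⟫_ℝ • u := by
  simp only [mv, outer, vecMulVec_mulVec', inner_eq_dot, WithLp.equiv_symm_apply, WithLp.toLp_smul,
    Equiv.symm_apply_apply, WithLp.equiv_apply, WithLp.toLp_ofLp]

lemma mv_norm (R : Matrix (Fin 3) (Fin 3) ℝ) (hR : Rᵀ * R = 1)
    (v : EuclideanSpace ℝ (Fin 3)) : ‖mv R v‖ = ‖v‖ := by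
  have h : ⟪mv R v, mv R v⟫_ℝ = ⟪v, v⟫_ℝ := by
    rw [inner_eq_dot, inner_eq_dot]
    simp only [mv, Equiv.apply_symm_apply]
    rw [Matrix.dotProduct_mulVec, ← Matrix.mulVec_transpose, Matrix.mulVec_mulVec, hR,
      Matrix.one_mulVec]
  have h2 := congrArg Real.sqrt h
  rwa [real_inner_self_eq_norm_sq, real_inner_self_eq_norm_sq,
    Real.sqrt_sq (norm_nonneg _), Real.sqrt_sq (norm_nonneg _)] at h2

theorem stmt16 (p t₀ l₀ : EuclideanSpace ℝ (Fin 3)) (R₀ : Matrix (Fin 3) (Fin 3) ℝ)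
    (hR₀ : R₀ᵀ * R₀ = 1) (hdet₀ : R₀.det = 1) (h₀ : l₀ ≠ t₀)
    (lam₀ : ℝ) (g₀ e₀ : EuclideanSpace ℝ (Fin 3))
    (hlam₀ : lam₀ = ⟪l₀ - t₀, mv R₀ p⟫_ℝ / ‖l₀ - t₀‖ ^ 2)
    (hg₀ : g₀ = (2 : ℝ)⁻¹ • mv R₀ p + ((2 : ℝ)⁻¹ * lam₀) • t₀ + ((2 : ℝ)⁻¹ * lam₀) • l₀)
    (he₀ : e₀ = mv (1 - (‖l₀ - t₀‖ ^ 2)⁻¹ • (R₀ᵀ * outer (l₀ - t₀) * R₀)) p) :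
    ‖mv R₀ p + lam₀ • t₀ - g₀‖ = (2 : ℝ)⁻¹ * ‖e₀‖ ∧
    ‖lam₀ • l₀ - g₀‖ = (2 : ℝ)⁻¹ * ‖e₀‖ := by
  have hRR : R₀ * R₀ᵀ = 1 := mul_eq_one_comm.mp hR₀
  have key : mv R₀ e₀ = mv R₀ p - lam₀ • (l₀ - t₀) := by
    rw [he₀, ← mv_mul]
    have hM : R₀ * (1 - (‖l₀ - t₀‖ ^ 2)⁻¹ • (R₀ᵀ * outer (l₀ - t₀) * R₀))
        = R₀ - (‖l₀ - t₀‖ ^ 2)⁻¹ • (outer (l₀ - t₀) * R₀) := by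
      rw [mul_sub, mul_one, Matrix.mul_smul, ← mul_assoc, ← mul_assoc, hRR, one_mul]
    rw [hM, mv_sub, mv_smul, mv_mul, mv_outer, smul_smul, hlam₀, div_eq_mul_inv,
      mul_comm]
  have hE : ‖e₀‖ = ‖mv R₀ p - lam₀ • (l₀ - t₀)‖ := by
    rw [← key, mv_norm R₀ hR₀]
  constructor
  · have h1 : mv R₀ p + lam₀ • t₀ - g₀ = (2 : ℝ)⁻¹ • (mv R₀ p - lam₀ • (l₀ - t₀)) := by
      rw [hg₀]; module
    rw [h1, norm_smul, hE]
    norm_num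
  · have h2 : lam₀ • l₀ - g₀ = -((2 : ℝ)⁻¹ • (mv R₀ p - lam₀ • (l₀ - t₀))) := by
      rw [hg₀]; module
    rw [h2, norm_neg, norm_smul, hE]
    norm_num
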